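/- arXiv:1302.2842 — 5 statements merged into one kernel-verified Lean document; each statement's English description precedes it below -/
import Mathlib

section
/- If a vertex s is a sink in an acyclic edge orientation of a finite graph and s is fired (all its incident edges reversed, making it a source), then there exists a sequence of firings in which every other vertex is fired exactly once, and after this sequence the original edge orientation is restored. -/
/-- An edge orientation of a simple graph `G`: each edge gets exactly one direction. -/
structure EdgeOrientation {V : Type*} (G : SimpleGraph V) where
  dir : V → V → Prop
  dir_adj : ∀ u v, dir u v → G.Adj u v
  dir_total : ∀ u v, G.Adj u v → (dir u v ↔ ¬ dir v u)

namespace EdgeOrientation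

variable {V : Type*} {G : SimpleGraph V}

/-- An orientation is acyclic if it admits no directed cycle. -/
def Acyclic (o : EdgeOrientation G) : Prop :=
  ∀ v, ¬ Relation.TransGen o.dir v v

/-- A sink is a vertex with no outgoing edges. -/
def IsSink (o : EdgeOrientation G) (s : V) : Prop :=
  ∀ t, ¬ o.dir s t

/-- The direction relation obtained by reversing all edges incident to `s`. -/
def fireDir (s : V) (d : V → V → Prop) : V → V → Prop :=
  fun u v => ((u = s ∨ v = s) ∧ d v u) ∨ (¬ (u = s ∨ v = s) ∧ d u v)

/-- One sink-firing move on acyclic orientations. -/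
def FireStep (o o' : EdgeOrientation G) : Prop :=
  o.Acyclic ∧ ∃ s, o.IsSink s ∧ o'.dir = fireDir s o.dir

/-- Reachability by finite sequences of sink-firing moves. -/
def Reach (o o' : EdgeOrientation G) : Prop :=
  Relation.ReflTransGen FireStep o o'

/-- `FireSeq o l o'` : starting from `o`, firing the vertices in the list `l` in order
(each of which must be a sink of an acyclic orientation at its turn) yields `o'`. -/
def FireSeq : EdgeOrientation G → List V → EdgeOrientation G → Prop
  | o, [], o' => o = o'
  | o, s :: l, o' =>
      ∃ o₁ : EdgeOrientation G,
        o.Acyclic ∧ o.IsSink s ∧ o₁.dir = fireDir s o.dir ∧ FireSeq o₁ l o'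

end EdgeOrientation

/-!
Let `S` be the set of vertices other than `s`. After firing `s`, the orientation is `o` with every
edge between `S` and `Sᶜ` reversed, and `S` is closed under in-neighbours in `o`. For such a cut
reversal the reversed orientation stays acyclic (a directed path that enters `S` never leaves it,
and inside `S` or inside `Sᶜ` it is an `o`-path), and a vertex `m ∈ S` without `o`-out-neighbours in
`S` is a sink. Firing `m` reverses the cut of `{m}`, and two cut reversals compose to the reversal of
the symmetric difference, so we are left with the same situation for `S \ {m}`. Induction on `S`
fires every vertex of `S` once and ends at the cut `∅`, i.e. at `o`.
-/

namespace EdgeOrientation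

variable {V : Type*} {G : SimpleGraph V}

theorem ext_dir {a b : EdgeOrientation G} (h : a.dir = b.dir) : a = b := by
  cases a; cases b; cases h; rfl

def reverseCut (o : EdgeOrientation G) (S : Set V) : EdgeOrientation G where
  dir u v := ((u ∈ S ↔ v ∈ S) ∧ o.dir u v) ∨ (¬(u ∈ S ↔ v ∈ S) ∧ o.dir v u)
  dir_adj u v h := h.elim (fun h => o.dir_adj u v h.2) (fun h => (o.dir_adj v u h.2).symm)
  dir_total u v hadj := by
    have := o.dir_total u v hadj
    tauto

def InClosed (o : EdgeOrientation G) (S : Set V) : Prop :=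
  ∀ u v, o.dir u v → v ∈ S → u ∈ S

variable (o : EdgeOrientation G)

@[simp]
theorem reverseCut_empty : o.reverseCut ∅ = o :=
  ext_dir <| by funext u v; simp [reverseCut]

theorem reverseCut_compl (S : Set V) : o.reverseCut Sᶜ = o.reverseCut S :=
  ext_dir <| by funext u v; simp only [reverseCut, Set.mem_compl_iff, not_iff_not]

theorem reverseCut_reverseCut (S T : Set V) :
    (o.reverseCut S).reverseCut T = o.reverseCut (symmDiff S T) :=
  ext_dir <| by
    funext u v
    simp only [reverseCut, Set.mem_symmDiff, eq_iff_iff]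
    by_cases u ∈ S <;> by_cases v ∈ S <;> by_cases u ∈ T <;> by_cases v ∈ T <;> simp [*]

theorem fireDir_eq_dir_reverseCut_singleton (s : V) :
    fireDir s o.dir = (o.reverseCut {s}).dir := by
  funext u v
  simp only [fireDir, reverseCut, Set.mem_singleton_iff, eq_iff_iff]
  by_cases hu : u = s <;> by_cases hv : v = s <;> simp [hu, hv]

variable {o}

theorem InClosed.diff_singleton {S : Set V} (hS : o.InClosed S) {m : V}
    (hm : ∀ t ∈ S, ¬o.dir m t) : o.InClosed (S \ {m}) := by
  rintro u v huv ⟨hv, -⟩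
  exact ⟨hS u v huv hv, by rintro rfl; exact hm v hv huv⟩

theorem InClosed.transGen_of_mem {S : Set V} (hS : o.InClosed S) {a b : V}
    (h : Relation.TransGen (o.reverseCut S).dir a b) (ha : a ∈ S) :
    Relation.TransGen o.dir a b ∧ b ∈ S := by
  induction h with
  | single hab =>
    rcases hab with ⟨hiff, hab⟩ | ⟨hiff, hba⟩
    · exact ⟨.single hab, hiff.mp ha⟩
    · exact absurd ⟨fun _ => hS _ _ hba ha, fun _ => ha⟩ hiff
  | tail _ hbc ih =>
    obtain ⟨hab, hb⟩ := ih
    rcases hbc with ⟨hiff, hbc⟩ | ⟨hiff, hcb⟩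
    · exact ⟨hab.tail hbc, hiff.mp hb⟩
    · exact absurd ⟨fun _ => hS _ _ hcb hb, fun _ => hb⟩ hiff

theorem InClosed.transGen_of_not_mem {S : Set V} (hS : o.InClosed S) {a b : V}
    (h : Relation.TransGen (o.reverseCut S).dir a b) (hb : b ∉ S) :
    Relation.TransGen o.dir a b ∧ a ∉ S := by
  induction h using Relation.TransGen.head_induction_on with
  | single hab =>
    rcases hab with ⟨hiff, hab⟩ | ⟨hiff, hba⟩
    · exact ⟨.single hab, hiff.not.mpr hb⟩
    · exact absurd (hS _ _ hba (by tauto)) hb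
  | head hab _ ih =>
    obtain ⟨hbc, hbS⟩ := ih
    rcases hab with ⟨hiff, hab⟩ | ⟨hiff, hba⟩
    · exact ⟨.head hab hbc, hiff.not.mpr hbS⟩
    · exact absurd (hS _ _ hba (by tauto)) hbS

theorem Acyclic.reverseCut (hacyc : o.Acyclic) {S : Set V} (hS : o.InClosed S) :
    (o.reverseCut S).Acyclic := by
  intro v hv
  by_cases hvS : v ∈ S
  · exact hacyc v (hS.transGen_of_mem hv hvS).1
  · exact hacyc v (hS.transGen_of_not_mem hv hvS).1

theorem InClosed.isSink_reverseCut {S : Set V} (hS : o.InClosed S) {m : V} (hmS : m ∈ S)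
    (hm : ∀ t ∈ S, ¬o.dir m t) : (o.reverseCut S).IsSink m := by
  rintro t (⟨hiff, hmt⟩ | ⟨hiff, htm⟩)
  · exact hm t (hiff.mp hmS) hmt
  · exact hiff ⟨fun _ => hS t m htm hmS, fun _ => hmS⟩

theorem Acyclic.exists_mem_forall_not_dir [Finite V] (hacyc : o.Acyclic) {S : Set V}
    (hS : S.Nonempty) : ∃ m ∈ S, ∀ t ∈ S, ¬o.dir m t := by
  have : IsStrictOrder V (Relation.TransGen (Function.swap o.dir)) :=
    { trans := fun _ _ _ => .trans
      irrefl := fun a h => hacyc a h.swap }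
  have hwf : WellFounded (Function.swap o.dir) :=
    Subrelation.wf Relation.TransGen.single (Finite.wellFounded_of_trans_of_irrefl _)
  exact hwf.has_min S hS

theorem Acyclic.exists_fireSeq_reverseCut [Finite V] [DecidableEq V] (hacyc : o.Acyclic)
    (S : Finset V) (hS : o.InClosed S) :
    ∃ l : List V, l.Nodup ∧ (∀ v, v ∈ l ↔ v ∈ S) ∧ FireSeq (o.reverseCut S) l o := by
  induction S using Finset.strongInduction with
  | H S ih =>
  obtain rfl | hne := S.eq_empty_or_nonempty
  · exact ⟨[], List.nodup_nil, by simp, by simp [FireSeq]⟩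
  obtain ⟨m, hmS, hm⟩ := hacyc.exists_mem_forall_not_dir (S := S) hne
  rw [Finset.mem_coe] at hmS
  have hfired : (o.reverseCut S).reverseCut {m} = o.reverseCut ↑(S.erase m) := by
    rw [reverseCut_reverseCut, symmDiff_of_ge (by simpa using hmS), Finset.coe_erase]
  obtain ⟨l, hnd, hmem, hseq⟩ := ih (S.erase m) (Finset.erase_ssubset hmS)
    (by simpa using hS.diff_singleton hm)
  refine ⟨m :: l, List.nodup_cons.mpr ⟨by simp [hmem], hnd⟩, ?_, ?_⟩
  · intro v
    by_cases hv : v = m <;> simp [hv, hmem, hmS]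
  · exact ⟨_, hacyc.reverseCut hS, hS.isSink_reverseCut hmS hm,
      (fireDir_eq_dir_reverseCut_singleton ..).symm, hfired ▸ hseq⟩

end EdgeOrientation

open EdgeOrientation in
/-- If a sink `s` of an acyclic orientation `o` of a finite graph is fired, yielding `o₁`,
then there is a sequence of firings in which every vertex other than `s` is fired exactly
once, restoring the original orientation `o`. -/
theorem fire_sink_playback {V : Type*} [Fintype V] {G : SimpleGraph V}
    (o o₁ : EdgeOrientation G) (s : V)
    (hacyc : o.Acyclic) (hsink : o.IsSink s) (hfire : o₁.dir = fireDir s o.dir) :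
    ∃ l : List V, l.Nodup ∧ (∀ v : V, v ∈ l ↔ v ≠ s) ∧ FireSeq o₁ l o := by
  classical
  have ho₁ : o₁ = o.reverseCut ↑({s}ᶜ : Finset V) := by
    rw [Finset.coe_compl, Finset.coe_singleton, reverseCut_compl]
    exact ext_dir (hfire.trans (fireDir_eq_dir_reverseCut_singleton o s))
  have hclosed : o.InClosed ↑({s}ᶜ : Finset V) := by
    intro u v huv hv
    simp only [Finset.coe_compl, Finset.coe_singleton, Set.mem_compl_iff,
      Set.mem_singleton_iff] at hv ⊢
    rintro rfl
    exact hsink v huv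
  obtain ⟨l, hnd, hmem, hseq⟩ := hacyc.exists_fireSeq_reverseCut _ hclosed
  exact ⟨l, hnd, by simpa using hmem, ho₁ ▸ hseq⟩
end

section
/- Firing a sink in an acyclic edge orientation of a finite graph yields again an acyclic edge orientation. -/
namespace Relation

variable {α : Type*} {r r' : α → α → Prop} {s : α}

theorem TransGen.not_right_of_forall_not (hs : ∀ u, ¬ r u s) {a : α} :
    ¬ TransGen r a s := fun h ↦
  let ⟨b, _, hbs⟩ := TransGen.tail'_iff.mp h
  hs b hbs

theorem TransGen.of_forall_not_right (hs : ∀ u, ¬ r' u s)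
    (hr : ∀ u v, u ≠ s → v ≠ s → r' u v → r u v) {a b : α} (h : TransGen r' a b) :
    a ≠ s → TransGen r a b := by
  induction h using TransGen.head_induction_on with
  | single hab =>
    intro ha
    exact .single (hr _ _ ha (fun hb ↦ hs _ (hb ▸ hab)) hab)
  | @head a c hac _ ih =>
    intro ha
    have hc : c ≠ s := by rintro rfl; exact hs a hac
    exact .head (hr _ _ ha hc hac) (ih hc)

end Relation

namespace EdgeOrientation

variable {V : Type*} {d : V → V → Prop} {s : V}

theorem not_fireDir_right (hs : ∀ t, ¬ d s t) (u : V) : ¬ fireDir s d u s := by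
  rintro (⟨-, hsu⟩ | ⟨hne, -⟩)
  · exact hs u hsu
  · exact hne (.inr rfl)

theorem of_fireDir_of_ne {u v : V} (hu : u ≠ s) (hv : v ≠ s) (h : fireDir s d u v) : d u v := by
  rcases h with ⟨hus | hvs, -⟩ | ⟨-, huv⟩
  · exact absurd hus hu
  · exact absurd hvs hv
  · exact huv

end EdgeOrientation

open EdgeOrientation in
theorem fire_sink_acyclic_general {V : Type*} {G : SimpleGraph V}
    (o o' : EdgeOrientation G) (s : V)
    (hacyc : o.Acyclic) (hsink : o.IsSink s) (hfire : o'.dir = fireDir s o.dir) :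
    o'.Acyclic := by
  intro v hcycle
  rw [hfire] at hcycle
  have hsource : ∀ u, ¬ fireDir s o.dir u s := not_fireDir_right hsink
  have hv : v ≠ s := by
    rintro rfl
    exact Relation.TransGen.not_right_of_forall_not hsource hcycle
  exact hacyc v (hcycle.of_forall_not_right hsource (fun _ _ ↦ of_fireDir_of_ne) hv)

open EdgeOrientation in
/-- Firing a sink of an acyclic edge orientation of a finite graph yields again
an acyclic edge orientation. -/
theorem fire_sink_acyclic {V : Type*} [Fintype V] {G : SimpleGraph V}
    (o o' : EdgeOrientation G) (s : V)
    (hacyc : o.Acyclic) (hsink : o.IsSink s) (hfire : o'.dir = fireDir s o.dir) :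
    o'.Acyclic :=
  fire_sink_acyclic_general o o' s hacyc hsink hfire
end

section
/- For the cycle graph on n vertices, two acyclic orientations are reachable from each other by sink firings if and only if they have the same number of anticlockwise-oriented edges; consequently there are exactly n−1 reachability classes, of sizes C(n,1), ..., C(n,n−1). -/
namespace Fin

open Fin.CommRing

variable {n : ℕ} [NeZero n]

theorem add_one_add_one_ne_self (hn : 3 ≤ n) (u : Fin n) : u + 1 + 1 ≠ u := by
  rw [Ne, add_assoc, add_eq_left, Fin.ext_iff, val_add, val_one',
    Nat.mod_eq_of_lt (by omega : 1 < n), Nat.mod_eq_of_lt (by omega : 1 + 1 < n), val_zero]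
  omega

theorem val_add_one_of_add_one_ne_zero {x : Fin n} (hx : x + 1 ≠ 0) :
    ((x + 1 : Fin n) : ℕ) = x + 1 := by
  rw [val_add, val_one', Nat.add_mod_mod]
  refine Nat.mod_eq_of_lt (lt_of_le_of_ne x.isLt fun h => hx ?_)
  rw [Fin.ext_iff, val_add, val_one', Nat.add_mod_mod, h, Nat.mod_self, val_zero]

theorem transGen_of_forall_add_one {r : Fin n → Fin n → Prop} (h : ∀ i, r i (i + 1)) (a : Fin n) :
    Relation.TransGen r a a := by
  have key : ∀ m : ℕ, Relation.TransGen r a (a + (m + 1 : ℕ)) := by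
    intro m
    induction m with
    | zero => simpa using .single (h a)
    | succ m ih =>
      rw [Nat.cast_succ (m + 1), ← add_assoc]
      exact ih.tail (h _)
  simpa [Nat.sub_add_cancel (NeZero.one_le : 1 ≤ n)] using key (n - 1)

theorem exists_mem_sub_one_notMem {S : Finset (Fin n)} (h₁ : S.Nonempty)
    (h₂ : S ≠ Finset.univ) : ∃ s ∈ S, s - 1 ∉ S := by
  by_contra! h
  obtain ⟨a, ha⟩ := h₁
  have hsub : ∀ m : ℕ, a - m ∈ S := by
    intro m
    induction m with
    | zero => simpa using ha
    | succ m ih => simpa [sub_sub] using h _ ih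
  exact h₂ (Finset.eq_univ_of_forall fun b => by simpa using hsub (a - b : Fin n))

end Fin

theorem SimpleGraph.cycleGraph_adj_iff_add_one {n : ℕ} [NeZero n] (hn : 3 ≤ n) {u v : Fin n} :
    (cycleGraph n).Adj u v ↔ v = u + 1 ∨ u = v + 1 := by
  have h1 : ((1 : Fin n) : ℕ) = 1 := Nat.mod_eq_of_lt (by omega : 1 < n)
  rw [cycleGraph_adj', ← h1, ← Fin.ext_iff, ← Fin.ext_iff, sub_eq_iff_eq_add, sub_eq_iff_eq_add,
    add_comm, add_comm u, or_comm]

theorem Nat.card_quot_eq_card_range {α β : Type*} {r : α → α → Prop} (f : α → β)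
    (h : ∀ a b, r a b ↔ f a = f b) : Nat.card (Quot r) = Nat.card (Set.range f) := by
  obtain rfl : r = (Setoid.ker f).r := funext₂ fun a b => propext (h a b)
  exact Nat.card_congr (Setoid.quotientKerEquivRange f)

namespace EdgeOrientation

variable {V : Type*} {G : SimpleGraph V}

theorem ext {o o' : EdgeOrientation G} (h : o.dir = o'.dir) : o = o' := by
  cases o; cases o'; cases h; rfl

def fire (o : EdgeOrientation G) (s : V) : EdgeOrientation G where
  dir := fireDir s o.dir
  dir_adj u v h := by
    rcases h with ⟨-, h⟩ | ⟨-, h⟩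
    exacts [(o.dir_adj v u h).symm, o.dir_adj u v h]
  dir_total u v huv := by
    have := o.dir_total u v huv
    simp only [fireDir]
    grind

@[simp]
theorem fire_dir (o : EdgeOrientation G) (s : V) : (o.fire s).dir = fireDir s o.dir := rfl

theorem fireStep_iff {o o' : EdgeOrientation G} :
    FireStep o o' ↔ o.Acyclic ∧ ∃ s, o.IsSink s ∧ o' = o.fire s := by
  refine ⟨fun ⟨ho, s, hs, hdir⟩ => ⟨ho, s, hs, ext hdir⟩, ?_⟩
  rintro ⟨ho, s, hs, rfl⟩
  exact ⟨ho, s, hs, rfl⟩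

theorem acyclic_of_dir_lt {α : Type*} [Preorder α] (o : EdgeOrientation G) (φ : V → α)
    (hφ : ∀ u v, o.dir u v → φ v < φ u) : o.Acyclic := fun v hv => by
  have : Relation.TransGen (· > ·) (φ v) (φ v) := hv.lift φ hφ
  rw [Relation.transGen_eq_self] at this
  exact lt_irrefl _ this

end EdgeOrientation

namespace CycleOrientation

open Finset Equiv Relation SimpleGraph EdgeOrientation Fin.CommRing

variable {n : ℕ} [NeZero n]

section Move

variable {S T : Finset (Fin n)}

/-- Firing the sink `s`, seen on the set of anticlockwise edges (see `fireStep_iff_move`). -/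
def Move (S T : Finset (Fin n)) : Prop :=
  ∃ s ∈ S, s - 1 ∉ S ∧ T = S.map (swap (s - 1) s).toEmbedding

theorem Move.card_eq (h : Move S T) : #T = #S := by
  obtain ⟨s, -, -, rfl⟩ := h
  exact card_map _

theorem card_eq_of_reflTransGen_move (h : ReflTransGen Move S T) : #T = #S := by
  induction h with
  | refl => rfl
  | tail _ h ih => rw [h.card_eq, ih]

theorem Move.map_subLeft (c : Fin n) (h : Move S T) :
    Move (T.map (Equiv.subLeft c).toEmbedding) (S.map (Equiv.subLeft c).toEmbedding) := by
  obtain ⟨s, hs, hs', rfl⟩ := h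
  refine ⟨c - (s - 1), ?_, ?_, ?_⟩
  · simp [mem_map_equiv, hs]
  · simp only [mem_map_equiv, subLeft_symm_apply, symm_swap, swap_apply_def]
    grind
  · ext i
    simp only [mem_map_equiv, subLeft_symm_apply, symm_swap, swap_apply_def]
    grind

theorem reflTransGen_move_map_subLeft (c : Fin n) (h : ReflTransGen Move S T) :
    ReflTransGen Move (T.map (Equiv.subLeft c).toEmbedding) (S.map (Equiv.subLeft c).toEmbedding) :=
  reflTransGen_swap.mp <| h.lift _ fun _ _ h => h.map_subLeft c

def initialSegment (k : ℕ) : Finset (Fin n) := (range k).image (↑)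

theorem mem_initialSegment {k : ℕ} (hk : k ≤ n) {i : Fin n} :
    i ∈ initialSegment k ↔ (i : ℕ) < k := by
  simp only [initialSegment, mem_image, mem_range]
  constructor
  · rintro ⟨j, hj, rfl⟩
    rwa [Fin.val_cast_of_lt (by omega)]
  · exact fun hi => ⟨i, hi, Fin.cast_val_eq_self i⟩

theorem card_initialSegment {k : ℕ} (hk : k ≤ n) : #(initialSegment (n := n) k) = k := by
  rw [initialSegment, card_image_of_injOn, card_range]
  intro a ha b hb hab
  simp only [coe_range, Set.mem_Iio] at ha hb
  simpa [Fin.val_cast_of_lt (ha.trans_le hk), Fin.val_cast_of_lt (hb.trans_le hk)]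
    using congrArg Fin.val hab

theorem initialSegment_map_subLeft (k : ℕ) :
    (initialSegment k).map (Equiv.subLeft ((k - 1 : ℕ) : Fin n)).toEmbedding =
      initialSegment k := by
  rw [initialSegment, map_eq_image, image_image]
  conv_rhs => rw [← range_image_pred_top_sub, image_image]
  refine image_congr fun j hj => ?_
  simp only [coe_range, Set.mem_Iio] at hj
  simp [Nat.cast_sub (show j ≤ k - 1 by omega)]

theorem sum_val_map_swap_lt {s : Fin n} (hs : s ∈ S) (hs₀ : s ≠ 0) (hs' : s - 1 ∉ S) :
    ∑ i ∈ S.map (swap (s - 1) s).toEmbedding, (i : ℕ) < ∑ i ∈ S, (i : ℕ) := by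
  rw [sum_map]
  have hlt : ((s - 1 : Fin n) : ℕ) < s := by
    rw [Fin.val_sub_one_of_ne_zero hs₀]
    exact Nat.sub_one_lt (Fin.val_ne_zero_iff.mpr hs₀)
  refine sum_lt_sum (fun i hi => ?_) ⟨s, hs, by simpa using hlt⟩
  rcases eq_or_ne i s with rfl | his
  · simpa using hlt.le
  · simp [swap_apply_of_ne_of_ne (ne_of_mem_of_not_mem hi hs') his]

theorem eq_initialSegment_of_forall_sub_one_mem (h : ∀ s ∈ S, s ≠ 0 → s - 1 ∈ S) :
    S = initialSegment #S := by
  have hlower : ∀ i ∈ S, ∀ j ≤ i, j ∈ S := by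
    intro i
    induction i using WellFoundedLT.induction with
    | _ i ih =>
      intro hi j hji
      rcases hji.eq_or_lt with rfl | hji
      · exact hi
      have hi₀ : i ≠ 0 := ((Fin.zero_le j).trans_lt hji).ne'
      have hval := Fin.val_sub_one_of_ne_zero hi₀
      rw [Fin.lt_def] at hji
      exact ih (i - 1) (by rw [Fin.lt_def]; omega) (h i hi hi₀) j (by rw [Fin.le_def]; omega)
  have hS : #S ≤ n := by simpa using card_le_univ S
  refine eq_of_subset_of_card_le (fun i hi => ?_) (card_initialSegment hS).le
  rw [mem_initialSegment hS]
  simpa using card_le_card fun j hj => hlower i hi j (mem_Iic.mp hj)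

theorem reflTransGen_move_initialSegment (S : Finset (Fin n)) :
    ReflTransGen Move S (initialSegment #S) := by
  by_cases h : ∃ s ∈ S, s ≠ 0 ∧ s - 1 ∉ S
  · obtain ⟨s, hs, hs₀, hs'⟩ := h
    have hmove : Move S (S.map (swap (s - 1) s).toEmbedding) := ⟨s, hs, hs', rfl⟩
    have := sum_val_map_swap_lt hs hs₀ hs'
    rw [← hmove.card_eq]
    exact .head hmove (reflTransGen_move_initialSegment _)
  · push Not at h
    rw [← eq_initialSegment_of_forall_sub_one_mem h]
termination_by ∑ i ∈ S, (i : ℕ)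
decreasing_by simpa only [sum_map] using this

theorem reflTransGen_move_iff_card_eq : ReflTransGen Move S T ↔ #S = #T := by
  refine ⟨fun h => (card_eq_of_reflTransGen_move h).symm, fun h => ?_⟩
  set c : Fin n := ((#S - 1 : ℕ) : Fin n)
  have hT := reflTransGen_move_initialSegment (T.map (Equiv.subLeft c).toEmbedding)
  rw [card_map, ← h] at hT
  have hcc : (T.map (Equiv.subLeft c).toEmbedding).map (Equiv.subLeft c).toEmbedding = T := by
    ext
    simp
  have hback := reflTransGen_move_map_subLeft c hT
  rw [initialSegment_map_subLeft, hcc] at hback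
  exact (reflTransGen_move_initialSegment S).trans hback

end Move

section Encoding

open Classical in
noncomputable def ccw (o : EdgeOrientation (cycleGraph n)) : Finset (Fin n) :=
  univ.filter fun i => o.dir (i + 1) i

variable {o o' : EdgeOrientation (cycleGraph n)}

theorem mem_ccw {i : Fin n} : i ∈ ccw o ↔ o.dir (i + 1) i := by
  simp [ccw]

theorem card_ccw : Nat.card {i : Fin n // o.dir (i + 1) i} = #(ccw o) := by
  classical
  rw [Nat.card_eq_fintype_card, Fintype.card_subtype]
  rfl

theorem dir_add_one_iff (hn : 3 ≤ n) (u : Fin n) : o.dir u (u + 1) ↔ u ∉ ccw o := by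
  rw [mem_ccw, o.dir_total _ _ ((cycleGraph_adj_iff_add_one hn).2 (.inl rfl))]

theorem dir_iff (hn : 3 ≤ n) {u v : Fin n} :
    o.dir u v ↔ (v = u + 1 ∧ u ∉ ccw o) ∨ (u = v + 1 ∧ v ∈ ccw o) := by
  constructor
  · intro h
    rcases (cycleGraph_adj_iff_add_one hn).1 (o.dir_adj u v h) with rfl | rfl
    · exact .inl ⟨rfl, (dir_add_one_iff hn u).1 h⟩
    · exact .inr ⟨rfl, mem_ccw.2 h⟩
  · rintro (⟨rfl, h⟩ | ⟨rfl, h⟩)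
    exacts [(dir_add_one_iff hn u).2 h, mem_ccw.1 h]

def ofCcw (hn : 3 ≤ n) (S : Finset (Fin n)) : EdgeOrientation (cycleGraph n) where
  dir u v := (v = u + 1 ∧ u ∉ S) ∨ (u = v + 1 ∧ v ∈ S)
  dir_adj u v h := (cycleGraph_adj_iff_add_one hn).2 (h.imp And.left And.left)
  dir_total u v huv := by
    have := Fin.add_one_add_one_ne_self hn
    rw [cycleGraph_adj_iff_add_one hn] at huv
    grind

theorem ofCcw_ccw (hn : 3 ≤ n) (o : EdgeOrientation (cycleGraph n)) : ofCcw hn (ccw o) = o :=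
  ext <| funext₂ fun _ _ => propext (dir_iff hn).symm

theorem ccw_ofCcw (hn : 3 ≤ n) (S : Finset (Fin n)) : ccw (ofCcw hn S) = S := by
  have := Fin.add_one_add_one_ne_self hn
  ext i
  rw [mem_ccw]
  simp only [ofCcw]
  grind

noncomputable def ccwEquiv (hn : 3 ≤ n) : EdgeOrientation (cycleGraph n) ≃ Finset (Fin n) where
  toFun := ccw
  invFun := ofCcw hn
  left_inv := ofCcw_ccw hn
  right_inv := ccw_ofCcw hn

theorem isSink_iff (hn : 3 ≤ n) {s : Fin n} : o.IsSink s ↔ s ∈ ccw o ∧ s - 1 ∉ ccw o := by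
  simp only [IsSink, dir_iff hn]
  constructor
  · intro h
    have h₁ := h (s + 1)
    have h₂ := h (s - 1)
    grind
  · grind

theorem ccw_fire (hn : 3 ≤ n) {s : Fin n} (hs : o.IsSink s) :
    ccw (o.fire s) = (ccw o).map (swap (s - 1) s).toEmbedding := by
  have := Fin.add_one_add_one_ne_self hn
  rw [isSink_iff hn] at hs
  ext i
  rw [mem_ccw, fire_dir, fireDir, dir_add_one_iff hn, ← mem_ccw, ← eq_sub_iff_add_eq,
    mem_map_equiv, symm_swap, swap_apply_def]
  grind

end Encoding

section Acyclicity

def potential (S : Finset (Fin n)) (s u : Fin n) : ℤ :=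
  if u = s then -n else ∑ j ∈ range (u - s : Fin n), if s + j ∈ S then 1 else -1

variable {S : Finset (Fin n)} {s u : Fin n}

theorem potential_add_one (hu : u ≠ s) (hu' : u + 1 ≠ s) :
    potential S s (u + 1) = potential S s u + if u ∈ S then 1 else -1 := by
  have hval : ((u + 1 - s : Fin n) : ℕ) = (u - s : Fin n) + 1 := by
    rw [← sub_add_eq_add_sub]
    exact Fin.val_add_one_of_add_one_ne_zero (by rwa [sub_add_eq_add_sub, sub_ne_zero])
  simp only [potential, if_neg hu, if_neg hu', hval, sum_range_succ, Fin.cast_val_eq_self,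
    add_sub_cancel]

theorem neg_lt_potential (hu : u ≠ s) : -(n : ℤ) < potential S s u := by
  rw [potential, if_neg hu]
  have := card_nsmul_le_sum (range (u - s : Fin n))
    (fun j => if s + j ∈ S then (1 : ℤ) else -1) (-1) fun j _ => by split_ifs <;> norm_num
  simp only [card_range, smul_neg, nsmul_eq_mul, mul_one] at this
  have := (u - s).isLt
  omega

variable {o : EdgeOrientation (cycleGraph n)}

/-- Away from the sink `s` the cycle is a path, along which `potential` drops at every arc;
the sink itself is placed below everything. -/
theorem acyclic_of_isSink (hn : 3 ≤ n) (hs : o.IsSink s) : o.Acyclic := by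
  rw [isSink_iff hn] at hs
  refine o.acyclic_of_dir_lt (potential (ccw o) s) fun u v h => ?_
  rcases (dir_iff hn).1 h with ⟨rfl, hu⟩ | ⟨rfl, hv⟩
  · have hus : u ≠ s := by rintro rfl; exact hu hs.1
    by_cases hu' : u + 1 = s
    · rw [hu', potential, if_pos rfl]
      exact neg_lt_potential hus
    · rw [potential_add_one hus hu', if_neg hu]
      omega
  · have hvs : v + 1 ≠ s := by rintro rfl; simp [hv] at hs
    by_cases hv' : v = s
    · rw [hv', potential, if_pos rfl]
      exact neg_lt_potential (hv' ▸ (o.dir_adj _ _ h).ne)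
    · rw [potential_add_one hv' hvs, if_pos hv]
      omega

theorem acyclic_iff (hn : 3 ≤ n) : o.Acyclic ↔ 0 < #(ccw o) ∧ #(ccw o) < n := by
  have hlt : #(ccw o) < n ↔ ccw o ≠ univ := by rw [← card_lt_iff_ne_univ, Fintype.card_fin]
  rw [card_pos, hlt]
  refine ⟨fun ho => ⟨?_, ?_⟩, fun ⟨h₁, h₂⟩ => ?_⟩
  · rw [nonempty_iff_ne_empty]
    intro h
    exact ho 0 <| Fin.transGen_of_forall_add_one (r := o.dir)
      (fun i => (dir_add_one_iff hn i).2 (by simp [h])) 0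
  · intro h
    exact ho 0 <| transGen_swap.1 <| Fin.transGen_of_forall_add_one (r := Function.swap o.dir)
      (fun i => mem_ccw.1 (by simp [h])) 0
  · obtain ⟨s, hs, hs'⟩ := Fin.exists_mem_sub_one_notMem h₁ h₂
    exact acyclic_of_isSink hn ((isSink_iff hn).2 ⟨hs, hs'⟩)

end Acyclicity

section Reachability

variable {o o' : EdgeOrientation (cycleGraph n)}

theorem fireStep_iff_move (hn : 3 ≤ n) (ho : o.Acyclic) :
    FireStep o o' ↔ Move (ccw o) (ccw o') := by
  rw [EdgeOrientation.fireStep_iff]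
  constructor
  · rintro ⟨-, s, hs, rfl⟩
    obtain ⟨hs₁, hs₂⟩ := (isSink_iff hn).1 hs
    exact ⟨s, hs₁, hs₂, ccw_fire hn hs⟩
  · rintro ⟨s, hs₁, hs₂, h⟩
    have hs := (isSink_iff hn).2 ⟨hs₁, hs₂⟩
    exact ⟨ho, s, hs, (ccwEquiv hn).injective (h.trans (ccw_fire hn hs).symm)⟩

theorem reach_iff_reflTransGen_move (hn : 3 ≤ n) (ho : o.Acyclic) :
    Reach o o' ↔ ReflTransGen Move (ccw o) (ccw o') := by
  refine ⟨fun h => h.lift ccw fun a b hab => (fireStep_iff_move hn hab.1).1 hab, fun h => ?_⟩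
  suffices ∀ T, ReflTransGen Move (ccw o) T → Reach o (ofCcw hn T) by
    simpa only [ofCcw_ccw] using this _ h
  intro T hT
  induction hT with
  | refl => rw [ofCcw_ccw]; exact .refl
  | tail hST hmove ih =>
    refine ih.tail ((fireStep_iff_move hn ?_).2 (by rwa [ccw_ofCcw, ccw_ofCcw]))
    rwa [acyclic_iff hn, ccw_ofCcw, card_eq_of_reflTransGen_move hST, ← acyclic_iff hn]

theorem reach_iff_card_eq (hn : 3 ≤ n) (ho : o.Acyclic) : Reach o o' ↔ #(ccw o) = #(ccw o') :=
  (reach_iff_reflTransGen_move hn ho).trans reflTransGen_move_iff_card_eq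

end Reachability

theorem card_acyclic_ccw_eq (hn : 3 ≤ n) {k : ℕ} (hk₁ : 1 ≤ k) (hk₂ : k ≤ n - 1) :
    Nat.card {o : EdgeOrientation (cycleGraph n) // o.Acyclic ∧ #(ccw o) = k} = n.choose k := by
  calc _ = Nat.card {S : Finset (Fin n) // #S = k} :=
        Nat.card_congr <| (ccwEquiv hn).subtypeEquiv fun o => by
          rw [acyclic_iff hn]
          exact ⟨And.right, fun h : #(ccw o) = k => ⟨by omega, h⟩⟩
    _ = n.choose k := by rw [Nat.card_eq_fintype_card, Fintype.card_finset_len, Fintype.card_fin]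

theorem range_card_ccw (hn : 3 ≤ n) :
    Set.range (fun o : {o : EdgeOrientation (cycleGraph n) // o.Acyclic} => #(ccw o.1)) =
      Icc 1 (n - 1) := by
  ext k
  simp only [Set.mem_range, coe_Icc, Set.mem_Icc]
  constructor
  · rintro ⟨o, rfl⟩
    have := (acyclic_iff hn).1 o.2
    omega
  · rintro ⟨hk₁, hk₂⟩
    obtain ⟨S, -, hS⟩ := exists_subset_card_eq (s := (univ : Finset (Fin n))) (n := k)
      (by simp; omega)
    refine ⟨⟨ofCcw hn S, ?_⟩, by simp [ccw_ofCcw, hS]⟩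
    rw [acyclic_iff hn, ccw_ofCcw, hS]
    omega

theorem card_quot_reach (hn : 3 ≤ n) :
    Nat.card (Quot fun a b : {o : EdgeOrientation (cycleGraph n) // o.Acyclic} =>
      Reach a.1 b.1) = n - 1 := by
  refine (Nat.card_quot_eq_card_range _ fun a b => reach_iff_card_eq (o' := b.1) hn a.2).trans ?_
  rw [range_card_ccw hn, Nat.card_coe_set_eq, Set.ncard_coe_finset, Nat.card_Icc]
  omega

end CycleOrientation

open EdgeOrientation in
/-- For the cycle graph on `n ≥ 3` vertices (edges oriented "anticlockwise" meaning from
`i+1` to `i`): two acyclic orientations are reachable from each other by sink firings iff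
they have the same number of anticlockwise edges; there are exactly `n - 1` reachability
classes, of sizes `C(n,1), …, C(n,n-1)`. -/
theorem cycleGraph_reachability_classes (n : ℕ) [NeZero n] (hn : 3 ≤ n) :
    (∀ o o' : EdgeOrientation (SimpleGraph.cycleGraph n), o.Acyclic → o'.Acyclic →
      (Reach o o' ↔
        Nat.card {i : Fin n // o.dir (i + 1) i} = Nat.card {i : Fin n // o'.dir (i + 1) i})) ∧
    (∀ k : ℕ, 1 ≤ k → k ≤ n - 1 →
      Nat.card {o : EdgeOrientation (SimpleGraph.cycleGraph n) //
        o.Acyclic ∧ Nat.card {i : Fin n // o.dir (i + 1) i} = k} = n.choose k) ∧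
    Nat.card
      (Quot fun a b : {o : EdgeOrientation (SimpleGraph.cycleGraph n) // o.Acyclic} =>
        Reach a.1 b.1) = n - 1 := by
  open CycleOrientation in
  exact ⟨fun o o' ho _ => by rw [card_ccw, card_ccw, reach_iff_card_eq hn ho],
    fun k hk₁ hk₂ => by simpa only [card_ccw] using card_acyclic_ccw_eq hn hk₁ hk₂,
    card_quot_reach hn⟩
end

section
/- Firing a sink in an acyclic orientation of a graph preserves the circulation (number of edges oriented one way minus the number oriented the other way) around every cycle of the graph. -/
open EdgeOrientation in
/-- The circulation of an orientation around a closed walk `w` (with its traversal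
direction): the number of edges of `w` oriented with the traversal minus the number
oriented against it. -/
noncomputable def EdgeOrientation.circulation {V : Type*} {G : SimpleGraph V}
    (o : EdgeOrientation G) {v : V} (w : G.Walk v v) : ℤ :=
  ((w.darts.countP fun d => @decide (o.dir d.fst d.snd) (Classical.propDecidable _)) : ℤ) -
  ((w.darts.countP fun d => @decide (o.dir d.snd d.fst) (Classical.propDecidable _)) : ℤ)

/-!
Firing a sink `s` reverses exactly the edges at `s`, all of which point into `s`. So on a dart
`u → v` the flow (+1 along the dart, -1 against it) changes by `φ u - φ v`, where `φ` is `2` at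
`s` and `0` elsewhere. Summed along a walk from `a` to `b` this telescopes to `φ a - φ b`, which
vanishes on closed walks.
-/

theorem SimpleGraph.Walk.sum_darts_eq_add_sub {V : Type*} {G : SimpleGraph V}
    {f f' : V → V → ℤ} {φ : V → ℤ} (hf : ∀ u v, G.Adj u v → f' u v = f u v + φ u - φ v)
    {a b : V} (p : G.Walk a b) :
    (p.darts.map fun d => f' d.fst d.snd).sum =
      (p.darts.map fun d => f d.fst d.snd).sum + φ a - φ b := by
  induction p with
  | nil => simp
  | cons huv p ih =>
    simp only [SimpleGraph.Walk.darts_cons, List.map_cons, List.sum_cons, ih, hf _ _ huv]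
    ring

namespace EdgeOrientation

variable {V : Type*} {G : SimpleGraph V}

open Classical in
noncomputable def flow (o : EdgeOrientation G) (u v : V) : ℤ :=
  (if o.dir u v then 1 else 0) - (if o.dir v u then 1 else 0)

theorem flow_swap (o : EdgeOrientation G) (u v : V) : o.flow v u = -o.flow u v :=
  (neg_sub _ _).symm

theorem flow_of_isSink {o : EdgeOrientation G} {s v : V} (hs : o.IsSink s) (hsv : G.Adj s v) :
    o.flow s v = -1 := by
  have hvs : o.dir v s := (o.dir_total v s hsv.symm).2 (hs v)
  simp [flow, hs v, hvs]

theorem circulation_eq_sum_flow (o : EdgeOrientation G) {v : V} (w : G.Walk v v) :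
    o.circulation w = (w.darts.map fun d => o.flow d.fst d.snd).sum := by
  unfold circulation
  induction w.darts with
  | nil => simp
  | cons d l ih =>
    rw [List.map_cons, List.sum_cons, ← ih, List.countP_cons, List.countP_cons, flow]
    split_ifs <;> simp_all <;> omega

theorem fireDir_iff_of_incident {s u v : V} {d : V → V → Prop} (h : u = s ∨ v = s) :
    fireDir s d u v ↔ d v u := by
  simp [fireDir, h]

theorem fireDir_iff_of_not_incident {s u v : V} {d : V → V → Prop} (h : ¬(u = s ∨ v = s)) :
    fireDir s d u v ↔ d u v := by
  simp [fireDir, h]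

theorem flow_congr {o o' : EdgeOrientation G} {u v x y : V} (h₁ : o'.dir u v ↔ o.dir x y)
    (h₂ : o'.dir v u ↔ o.dir y x) : o'.flow u v = o.flow x y := by
  classical
  simp only [flow, h₁, h₂]

theorem flow_of_fireDir_incident {o o' : EdgeOrientation G} {s u v : V}
    (ho' : o'.dir = fireDir s o.dir) (h : u = s ∨ v = s) : o'.flow u v = -o.flow u v :=
  (flow_congr (ho' ▸ fireDir_iff_of_incident h) (ho' ▸ fireDir_iff_of_incident h.symm)).trans
    (o.flow_swap u v)

theorem flow_of_fireDir_not_incident {o o' : EdgeOrientation G} {s u v : V}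
    (ho' : o'.dir = fireDir s o.dir) (h : ¬(u = s ∨ v = s)) : o'.flow u v = o.flow u v :=
  flow_congr (ho' ▸ fireDir_iff_of_not_incident h)
    (ho' ▸ fireDir_iff_of_not_incident (by rwa [or_comm]))

open Classical in
theorem flow_fire_eq_add_sub {o o' : EdgeOrientation G} {s u v : V} (hs : o.IsSink s)
    (ho' : o'.dir = fireDir s o.dir) (huv : G.Adj u v) :
    o'.flow u v = o.flow u v + (if u = s then 2 else 0) - (if v = s then 2 else 0) := by
  by_cases hu : u = s
  · subst hu
    rw [flow_of_fireDir_incident ho' (.inl rfl), flow_of_isSink hs huv, if_pos rfl,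
      if_neg huv.ne.symm]
    norm_num
  by_cases hv : v = s
  · subst hv
    rw [flow_of_fireDir_incident ho' (.inr rfl), flow_swap, flow_of_isSink hs huv.symm,
      if_neg hu, if_pos rfl]
    norm_num
  rw [flow_of_fireDir_not_incident ho' (by tauto), if_neg hu, if_neg hv]
  ring

end EdgeOrientation

open EdgeOrientation in
theorem fireStep_preserves_circulation_general {V : Type*} {G : SimpleGraph V}
    (o o' : EdgeOrientation G) (h : FireStep o o')
    {v : V} (w : G.Walk v v) :
    o'.circulation w = o.circulation w := by
  obtain ⟨-, s, hs, ho'⟩ := h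
  rw [circulation_eq_sum_flow, circulation_eq_sum_flow,
    w.sum_darts_eq_add_sub fun _ _ => flow_fire_eq_add_sub hs ho', add_sub_cancel_right]

open EdgeOrientation in
/-- Firing a sink in an acyclic orientation preserves the circulation around every
cycle of the graph. -/
theorem fireStep_preserves_circulation {V : Type*} [Fintype V] {G : SimpleGraph V}
    (o o' : EdgeOrientation G) (h : FireStep o o')
    {v : V} (w : G.Walk v v) (hw : w.IsCycle) :
    o'.circulation w = o.circulation w :=
  fireStep_preserves_circulation_general o o' h w
end

section
/- In a Coxeter group whose Coxeter graph is a finite tree, all Coxeter elements are conjugate to each other. -/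
/-- The Coxeter graph of a Coxeter matrix: vertices are the generators, with an edge
between `i` and `j` whenever the corresponding generators do not commute
(i.e. `M i j ≠ 2`). -/
def CoxeterMatrix.graph {B : Type*} (M : CoxeterMatrix B) : SimpleGraph B where
  Adj i j := i ≠ j ∧ M i j ≠ 2
  symm := ⟨fun i j h => ⟨h.1.symm, by rw [M.symmetric]; exact h.2⟩⟩
  loopless := ⟨fun i h => h.1 rfl⟩

/-- A Coxeter word: a list of generators containing each generator exactly once. -/
def IsCoxeterWord {B : Type*} (l : List B) : Prop :=
  l.Nodup ∧ ∀ i : B, i ∈ l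

/-- One commutation move: swapping two adjacent commuting letters. -/
def CommSwap {B : Type*} (M : CoxeterMatrix B) (l l' : List B) : Prop :=
  ∃ (a b : B) (p q : List B), M a b = 2 ∧ l = p ++ a :: b :: q ∧ l' = p ++ b :: a :: q

/-- One rotation move: moving the first letter of a word to the end. -/
def RotMove {B : Type*} (l l' : List B) : Prop :=
  ∃ (a : B) (t : List B), l = a :: t ∧ l' = t ++ [a]

/-- Rotation equivalence: the equivalence relation on words generated by rotations
and commutations of adjacent commuting letters. -/
def RotEquiv {B : Type*} (M : CoxeterMatrix B) : List B → List B → Prop :=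
  Relation.EqvGen (fun l l' => CommSwap M l l' ∨ RotMove l l')


/-! Rotating a word conjugates its product and swapping adjacent commuting letters leaves it
unchanged, so it suffices to connect any two Coxeter words by these moves. Induct on the number
of generators. A leaf `s` of the tree, with neighbour `t`, commutes with every other generator,
so rotations and commutations bring any Coxeter word to the form `t s u`. The word `t u` is a
Coxeter word for the tree with `s` removed; by induction any two such words are related by
moves, and each of these moves survives the substitution `t ↦ t s`. -/

namespace RotEquiv

variable {B : Type*} {M : CoxeterMatrix B} {l l' l'' : List B}

theorem equivalence : Equivalence (RotEquiv M) := Relation.EqvGen.is_equivalence _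

@[refl]
protected theorem refl (l : List B) : RotEquiv M l l := equivalence.refl l

protected theorem symm (h : RotEquiv M l l') : RotEquiv M l' l := equivalence.symm h

protected theorem trans (h : RotEquiv M l l') (h' : RotEquiv M l' l'') : RotEquiv M l l'' :=
  equivalence.trans h h'

instance : Trans (RotEquiv M) (RotEquiv M) (RotEquiv M) := ⟨RotEquiv.trans⟩

theorem induction {r : List B → List B → Prop} (hr : Equivalence r)
    (swap : ∀ a b p q, M a b = 2 → r (p ++ a :: b :: q) (p ++ b :: a :: q))
    (rotate : ∀ a t, r (a :: t) (t ++ [a])) (h : RotEquiv M l l') : r l l' := by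
  refine hr.eqvGen_iff.1 (Relation.EqvGen.mono (fun x y hxy => ?_) l l' h)
  rcases hxy with ⟨a, b, p, q, hab, rfl, rfl⟩ | ⟨a, t, rfl, rfl⟩
  exacts [swap a b p q hab, rotate a t]

theorem swap {a b : B} (hab : M a b = 2) (p q : List B) :
    RotEquiv M (p ++ a :: b :: q) (p ++ b :: a :: q) :=
  .rel _ _ (.inl ⟨a, b, p, q, hab, rfl, rfl⟩)

theorem append_comm (u v : List B) : RotEquiv M (u ++ v) (v ++ u) := by
  induction u generalizing v with
  | nil => simp [RotEquiv.refl]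
  | cons a u ih =>
    calc RotEquiv M (a :: (u ++ v)) (u ++ (v ++ [a])) :=
          .rel _ _ (.inr ⟨a, u ++ v, rfl, by simp⟩)
      RotEquiv M _ (v ++ a :: u) := by simpa using ih (v ++ [a])

theorem perm (h : RotEquiv M l l') : l.Perm l' :=
  h.induction ⟨.refl, .symm, .trans⟩ (fun a b p _ _ => (List.Perm.swap b a _).append_left p)
    (fun a t => (List.perm_append_singleton a t).symm)

theorem slide {a : B} {v : List B} (hv : ∀ b ∈ v, M a b = 2) (p q : List B) :
    RotEquiv M (p ++ a :: (v ++ q)) (p ++ (v ++ a :: q)) := by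
  induction v generalizing p with
  | nil => rfl
  | cons b v ih =>
    calc RotEquiv M (p ++ a :: b :: (v ++ q)) ((p ++ [b]) ++ a :: (v ++ q)) := by
          simpa using swap (hv b (List.mem_cons_self ..)) p (v ++ q)
      RotEquiv M _ ((p ++ [b]) ++ (v ++ a :: q)) :=
          ih (fun c hc => hv c (List.mem_cons_of_mem b hc)) _
      RotEquiv M _ (p ++ (b :: v ++ a :: q)) := by simp [RotEquiv.refl]

theorem swap_blocks {u v : List B} (huv : ∀ a ∈ u, ∀ b ∈ v, M a b = 2) (p q : List B) :
    RotEquiv M (p ++ (u ++ (v ++ q))) (p ++ (v ++ (u ++ q))) := by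
  induction u generalizing p with
  | nil => rfl
  | cons a u ih =>
    have h1 := ih (fun c hc => huv c (List.mem_cons_of_mem a hc)) (p ++ [a])
    have h2 := slide (huv a (List.mem_cons_self ..)) p (u ++ q)
    simp only [List.append_assoc, List.cons_append] at h1 h2 ⊢
    exact h1.trans h2

theorem flatMap {C : Type*} {M' : CoxeterMatrix C} {f : C → List B}
    (hf : ∀ a b, M' a b = 2 → ∀ x ∈ f a, ∀ y ∈ f b, M x y = 2) {w w' : List C}
    (h : RotEquiv M' w w') : RotEquiv M (w.flatMap f) (w'.flatMap f) :=
  h.induction (r := fun x y => RotEquiv M (x.flatMap f) (y.flatMap f))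
    ⟨fun _ => .refl _, .symm, .trans⟩
    (fun a b p q hab => by simpa using swap_blocks (hf a b hab) (p.flatMap f) (q.flatMap f))
    (fun a t => by simpa using append_comm (f a) (t.flatMap f))

theorem isConj {W : Type*} [Group W] (cs : CoxeterSystem M W) (h : RotEquiv M l l') :
    IsConj (cs.wordProd l) (cs.wordProd l') := by
  refine h.induction (r := fun x y => IsConj (cs.wordProd x) (cs.wordProd y))
    ⟨fun _ => .refl _, .symm, .trans⟩ (fun a b p q hab => ?_) (fun a t => ?_)
  · have hcomm : cs.simple a * cs.simple b = cs.simple b * cs.simple a := by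
      have h2 := cs.simple_mul_simple_pow a b
      rw [hab, pow_two] at h2
      rw [eq_inv_of_mul_eq_one_left h2, mul_inv_rev, cs.inv_simple, cs.inv_simple]
    simp only [cs.wordProd_append, cs.wordProd_cons, ← mul_assoc, hcomm]
    rfl
  · rw [isConj_iff]
    exact ⟨(cs.simple a)⁻¹, by simp [cs.wordProd_cons, cs.wordProd_append]⟩

end RotEquiv

theorem IsCoxeterWord.perm {B : Type*} {l l' : List B} (hl : IsCoxeterWord l) (h : l.Perm l') :
    IsCoxeterWord l' :=
  ⟨h.nodup_iff.1 hl.1, fun i => h.mem_iff.1 (hl.2 i)⟩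

theorem IsCoxeterWord.eq_of_subsingleton {B : Type*} [Subsingleton B] {l l' : List B}
    (hl : IsCoxeterWord l) (hl' : IsCoxeterWord l') : l = l' := by
  have hperm : l.Perm l' := (List.perm_ext_iff_of_nodup hl.1 hl'.1).2 fun i => by simp [hl.2, hl'.2]
  exact List.ext_getElem hperm.length_eq fun _ _ _ => Subsingleton.elim _ _

protected def CoxeterMatrix.comap {B B' : Type*} (f : B' ↪ B) (M : CoxeterMatrix B) :
    CoxeterMatrix B' where
  M := M.M.submatrix f f
  isSymm := M.isSymm.submatrix _
  diagonal i := M.diagonal (f i)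
  off_diagonal _ _ h := M.off_diagonal _ _ (f.injective.ne h)

theorem CoxeterMatrix.graph_comap {B B' : Type*} (f : B' ↪ B) (M : CoxeterMatrix B) :
    (M.comap f).graph = M.graph.comap f := by
  ext
  exact and_congr_left' f.injective.ne_iff.symm

section Leaf

variable {B : Type*} {M : CoxeterMatrix B} {s t : B}

def insertAfter [DecidableEq B] (s t b : B) : List B :=
  if b = t then [t, s] else [b]

theorem mem_insertAfter [DecidableEq B] {x b : B} :
    x ∈ insertAfter s t b ↔ x = b ∨ b = t ∧ x = s := by
  unfold insertAfter
  split_ifs with h <;> simp [h]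

theorem flatMap_insertAfter_of_not_mem [DecidableEq B] {u : List B} (htu : t ∉ u) :
    u.flatMap (insertAfter s t) = u := by
  conv_rhs => rw [← List.flatMap_singleton' u]
  exact List.flatMap_congr fun b hb => if_neg (by rintro rfl; exact htu hb)

theorem exists_flatMap_insertAfter_eq [DecidableEq B] {u : List B}
    (hu : IsCoxeterWord (t :: s :: u)) :
    ∃ w : List ({s}ᶜ : Set B), IsCoxeterWord w ∧
      (w.map (↑)).flatMap (insertAfter s t) = t :: s :: u := by
  obtain ⟨hnd, hmem⟩ := hu
  simp only [List.nodup_cons, List.mem_cons, not_or] at hnd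
  obtain ⟨⟨hts, htu⟩, hsu, hund⟩ := hnd
  have hne : ∀ b ∈ t :: u, b ∈ ({s}ᶜ : Set B) := by
    simp only [List.mem_cons, forall_eq_or_imp]
    exact ⟨hts, fun b hb => by rintro rfl; exact hsu hb⟩
  refine ⟨(t :: u).pmap Subtype.mk hne, ⟨?_, fun b => ?_⟩, ?_⟩
  · exact (List.nodup_cons.2 ⟨htu, hund⟩).pmap fun _ _ _ _ => congrArg Subtype.val
  · have := hmem b
    simp only [List.mem_cons] at this
    exact List.mem_pmap.2 ⟨b, by grind, rfl⟩
  · simp [List.map_pmap, insertAfter, flatMap_insertAfter_of_not_mem htu]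

variable (hM : ∀ b, b ≠ s → b ≠ t → M s b = 2)
include hM

theorem exists_rotEquiv_cons_cons (hst : s ≠ t) {l : List B} (hl : IsCoxeterWord l) :
    ∃ u, RotEquiv M l (t :: s :: u) := by
  obtain ⟨p, q, rfl⟩ := List.append_of_mem (hl.2 t)
  have hrot : RotEquiv M (p ++ t :: q) (t :: (q ++ p)) := by
    simpa using RotEquiv.append_comm p (t :: q)
  have hk := hl.perm hrot.perm
  obtain ⟨r, r', hr⟩ := List.append_of_mem ((List.mem_cons.1 (hk.2 s)).resolve_left hst)
  have hnd := hk.1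
  rw [hr, List.nodup_cons, List.nodup_middle, List.nodup_cons] at hnd
  have hr_comm : ∀ b ∈ r, M s b = 2 := fun b hb =>
    hM b (by rintro rfl; simp_all) (by rintro rfl; simp_all)
  refine ⟨r ++ r', hrot.trans ?_⟩
  rw [hr]
  exact (RotEquiv.slide hr_comm [t] r').symm

theorem exists_rotEquiv_flatMap_insertAfter [DecidableEq B] (hst : s ≠ t) {l : List B}
    (hl : IsCoxeterWord l) :
    ∃ w : List ({s}ᶜ : Set B), IsCoxeterWord w ∧
      RotEquiv M l ((w.map (↑)).flatMap (insertAfter s t)) := by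
  obtain ⟨u, hu⟩ := exists_rotEquiv_cons_cons hM hst hl
  obtain ⟨w, hw, hwu⟩ := exists_flatMap_insertAfter_eq (hl.perm hu.perm)
  exact ⟨w, hw, hwu ▸ hu⟩

theorem RotEquiv.flatMap_insertAfter [DecidableEq B] {w w' : List ({s}ᶜ : Set B)}
    (h : RotEquiv (M.comap (Function.Embedding.subtype _)) w w') :
    RotEquiv M ((w.map (↑)).flatMap (insertAfter s t))
      ((w'.map (↑)).flatMap (insertAfter s t)) := by
  rw [List.flatMap_map, List.flatMap_map]
  refine h.flatMap fun a b hab x hx y hy => ?_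
  have hne : (a : B) ≠ b := Subtype.coe_ne_coe.2 (by rintro rfl; simp at hab)
  rw [mem_insertAfter] at hx hy
  rcases hx with rfl | ⟨ha, rfl⟩ <;> rcases hy with rfl | ⟨hb, rfl⟩
  · exact hab
  · rw [M.symmetric]; exact hM _ a.2 (hb ▸ hne)
  · exact hM _ b.2 (ha ▸ hne.symm)
  · exact absurd (ha.trans hb.symm) hne

theorem rotEquiv_of_rotEquiv_compl_singleton (hst : s ≠ t)
    (h : ∀ w w' : List ({s}ᶜ : Set B), IsCoxeterWord w → IsCoxeterWord w' →
      RotEquiv (M.comap (Function.Embedding.subtype _)) w w')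
    {l l' : List B} (hl : IsCoxeterWord l) (hl' : IsCoxeterWord l') : RotEquiv M l l' := by
  classical
  obtain ⟨w, hw, hlw⟩ := exists_rotEquiv_flatMap_insertAfter hM hst hl
  obtain ⟨w', hw', hlw'⟩ := exists_rotEquiv_flatMap_insertAfter hM hst hl'
  exact hlw.trans ((RotEquiv.flatMap_insertAfter hM (h w w' hw hw')).trans hlw'.symm)

end Leaf

theorem rotEquiv_of_isTree {B : Type*} [Finite B] {M : CoxeterMatrix B} (htree : M.graph.IsTree)
    {l l' : List B} (hl : IsCoxeterWord l) (hl' : IsCoxeterWord l') : RotEquiv M l l' := by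
  induction B using Finite.induction_subsingleton_or_nontrivial with
  | hbase B => exact hl.eq_of_subsingleton hl' ▸ .refl l
  | hstep B ih =>
    classical
    have := Fintype.ofFinite B
    obtain ⟨s, hs⟩ := htree.exists_vert_degree_one_of_nontrivial
    obtain ⟨t, hst, ht⟩ := SimpleGraph.degree_eq_one_iff_existsUnique_adj.1 hs
    have hM : ∀ b, b ≠ s → b ≠ t → M s b = 2 := fun b hbs hbt =>
      by_contra fun h => hbt (ht b ⟨hbs.symm, h⟩)
    refine rotEquiv_of_rotEquiv_compl_singleton hM hst.ne (fun w w' hw hw' => ?_) hl hl'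
    have htree' : (M.comap (.subtype (· ∈ ({s}ᶜ : Set B)))).graph.IsTree := by
      rw [CoxeterMatrix.graph_comap]
      exact ⟨htree.connected.induce_compl_singleton_of_degree_eq_one hs,
        htree.isAcyclic.induce _⟩
    exact ih _ (Finite.card_subtype_lt (not_not.2 rfl)) htree' hw hw'

/-- In a Coxeter group whose Coxeter graph is a finite tree, all Coxeter elements
are conjugate to each other. -/
theorem coxeterElements_conj_of_tree {B W : Type*} [Finite B] [Group W]
    {M : CoxeterMatrix B} (cs : CoxeterSystem M W) (htree : M.graph.IsTree)
    (l l' : List B) (hl : IsCoxeterWord l) (hl' : IsCoxeterWord l') :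
    IsConj (cs.wordProd l) (cs.wordProd l') :=
  (rotEquiv_of_isTree htree hl hl').isConj cs
end
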